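/- arXiv:1704.00487 — 4 statements merged into one kernel-verified Lean document; each statement's English description precedes it below -/
import Mathlib

section
/- Let q be an even power of an odd prime and write s = √q, so that q = s². If s ≡ 1 (mod 4), then the independence number of the Erdős–Rényi polarity graph satisfies α(ER_q) ≥ (q^{3/2} + q)/2 + q + 1, i.e. α(ER_q) ≥ (s³ + 3s²)/2 + 1. -/
open Projectivization

/-- Two points of `PG(2,q)` are conjugate with respect to the orthogonal polarity of the
conic `X₂² - X₁X₃ = 0` if the bilinear form `p₃q₁ - 2p₂q₂ + p₁q₃` vanishes (this is
independent of the chosen representatives). -/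
def ConjOdd {F : Type} [Field F] (P Q : Projectivization F (Fin 3 → F)) : Prop :=
  P.rep 2 * Q.rep 0 - 2 * P.rep 1 * Q.rep 1 + P.rep 0 * Q.rep 2 = 0

/-- The Erdős–Rényi polarity graph `ER_q`: vertices are the points of `PG(2,q)`, two
distinct points being adjacent when they are conjugate. -/
def ER (F : Type) [Field F] : SimpleGraph (Projectivization F (Fin 3 → F)) where
  Adj P Q := P ≠ Q ∧ ConjOdd P Q
  symm := by
    constructor
    rintro P Q ⟨h1, h2⟩
    exact ⟨h1.symm, by unfold ConjOdd at *; linear_combination h2⟩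
  loopless := ⟨fun P h => h.1 rfl⟩

/-!
The independent set is a union of the conics `X₁X₃ = X₂² + wX₁²`, `w ∈ W`, of the pencil through
`(0 : 0 : 1)`. The points `(1 : b : b² + w)` and `(1 : y : y² + w')` are conjugate iff
`(b - y)² = -(w + w')`, so the union is independent once `-(w + w')` is a non-square for all
`w, w' ∈ W` not both zero. Take `W = g • ({0} ∪ μₘ)` with `g` a non-square and `μₘ` the group of
`m`-th roots of unity, `m = (s + 1) / 2`, which is odd because `s ≡ 1 (mod 4)`. Then `-1` and all
of `μₘ` are squares, and so is `1 + η` for `η ∈ μₘ`: Frobenius gives `(1 + η)^(s - 1) = η⁻¹`,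
hence `(1 + η)^((q - 1) / 2) = η^(-m) = 1`. So `-(x + y) = -x (1 + y / x)` is a nonzero square for
`x, y ∈ μₘ`, and `|W| = m + 1` gives `q (s + 3) / 2 + 1` points.
-/

open Polynomial
open scoped LinearAlgebra.Projectivization

section Geometry

variable {F : Type} [Field F]

lemma conjOdd_mk_iff {v w : Fin 3 → F} (hv : v ≠ 0) (hw : w ≠ 0) :
    ConjOdd (mk F v hv) (mk F w hw) ↔ v 2 * w 0 - 2 * v 1 * w 1 + v 0 * w 2 = 0 := by
  obtain ⟨a, ha⟩ := exists_smul_eq_mk_rep F v hv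
  obtain ⟨b, hb⟩ := exists_smul_eq_mk_rep F w hw
  have hab : (a * b : F) ≠ 0 := mul_ne_zero a.ne_zero b.ne_zero
  simp only [ConjOdd, ← ha, ← hb, Units.smul_def, Pi.smul_apply, smul_eq_mul]
  rw [show (a : F) * v 2 * (b * w 0) - 2 * (a * v 1) * (b * w 1) + a * v 0 * (b * w 2) =
      a * b * (v 2 * w 0 - 2 * v 1 * w 1 + v 0 * w 2) by ring, mul_eq_zero, or_iff_right hab]

/-- A point of the conic `X₁X₃ = X₂² + wX₁²`; all these conics pass through `infinityPoint`. -/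
def conicPoint (y w : F) : ℙ F (Fin 3 → F) :=
  mk F ![1, y, y ^ 2 + w] fun h => one_ne_zero (congrFun h 0)

def infinityPoint : ℙ F (Fin 3 → F) :=
  mk F ![0, 0, 1] fun h => one_ne_zero (congrFun h 2)

lemma conjOdd_conicPoint_iff (b w y w' : F) :
    ConjOdd (conicPoint b w) (conicPoint y w') ↔ (b - y) ^ 2 = -(w + w') := by
  rw [conicPoint, conicPoint, conjOdd_mk_iff]
  simp only [Matrix.cons_val_zero, Matrix.cons_val_one, Matrix.cons_val_two, Matrix.head_cons,
    Matrix.tail_cons]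
  constructor <;> intro h <;> linear_combination h

lemma not_conjOdd_infinityPoint_conicPoint (y w : F) :
    ¬ConjOdd infinityPoint (conicPoint y w) := by
  rw [infinityPoint, conicPoint, conjOdd_mk_iff]
  simp

lemma conicPoint_ne_infinityPoint (y w : F) : conicPoint y w ≠ infinityPoint := by
  rw [conicPoint, infinityPoint, Ne, mk_eq_mk_iff']
  rintro ⟨a, ha⟩
  simpa using congrFun ha 0

lemma conicPoint_injective2 : Function.Injective2 (conicPoint (F := F)) := by
  intro b y w w' h
  rw [conicPoint, conicPoint, mk_eq_mk_iff'] at h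
  obtain ⟨a, ha⟩ := h
  have ha1 : a = 1 := by simpa using congrFun ha 0
  subst ha1
  have hy : y = b := by simpa using congrFun ha 1
  subst hy
  exact ⟨rfl, by simpa using (congrFun ha 2).symm⟩

def conicUnion (W : Set F) : Set (ℙ F (Fin 3 → F)) :=
  insert infinityPoint (Set.image2 conicPoint Set.univ W)

theorem isIndepSet_conicUnion {W : Set F}
    (hW : ∀ w ∈ W, ∀ w' ∈ W, IsSquare (-(w + w')) → w = 0 ∧ w' = 0) :
    (ER F).IsIndepSet (conicUnion W) := by
  rintro P (rfl | ⟨b, -, w, hw, rfl⟩) Q (rfl | ⟨y, -, w', hw', rfl⟩) hne hadj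
  · exact hne rfl
  · exact not_conjOdd_infinityPoint_conicPoint y w' hadj.2
  · exact not_conjOdd_infinityPoint_conicPoint b w hadj.symm.2
  · have hsq := (conjOdd_conicPoint_iff b w y w').1 hadj.2
    obtain ⟨rfl, rfl⟩ := hW w hw w' hw' ⟨b - y, by rw [← hsq, sq]⟩
    have hby : b = y := sub_eq_zero.1 (pow_eq_zero_iff two_ne_zero |>.1 (by simpa using hsq))
    exact hne (by rw [hby])

theorem ncard_conicUnion [Fintype F] (W : Finset F) :
    (conicUnion (W : Set F)).ncard = Fintype.card F * W.card + 1 := by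
  rw [conicUnion, Set.ncard_insert_of_notMem, ← Set.image_uncurry_prod,
    Set.ncard_image_of_injective _ conicPoint_injective2.uncurry, Set.ncard_prod,
    Set.ncard_univ, Nat.card_eq_fintype_card, Set.ncard_coe_finset]
  · rintro ⟨y, -, w, -, h⟩
    exact conicPoint_ne_infinityPoint y w h

end Geometry

theorem isSquare_of_pow_eq_one_of_odd {M : Type*} [Monoid M] {m : ℕ} (hm : Odd m) {x : M}
    (hx : x ^ m = 1) : IsSquare x := by
  obtain ⟨j, rfl⟩ := hm
  refine ⟨x ^ (j + 1), ?_⟩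
  calc x = x ^ (2 * j + 1) * x := by rw [hx, one_mul]
    _ = x ^ (j + 1) * x ^ (j + 1) := by rw [← pow_succ, ← pow_add]; ring_nf

lemma Nat.sq_eq_two_mul_add_one {s m : ℕ} (hm : s + 1 = 2 * m) :
    s ^ 2 = 2 * ((s - 1) * m) + 1 := by
  have hs : 1 ≤ s := by omega
  zify [hs] at hm ⊢
  linear_combination ((s : ℤ) - 1) * hm

section FiniteField

variable {F : Type*} [Field F]

lemma one_add_ne_zero_of_pow_eq_one (hF : ringChar F ≠ 2) {m : ℕ} (hm : Odd m) {x : F}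
    (hx : x ^ m = 1) : 1 + x ≠ 0 := by
  intro h
  rw [eq_neg_of_add_eq_zero_right h, hm.neg_one_pow] at hx
  exact Ring.neg_one_ne_one_of_char_ne_two hF hx

variable [Fintype F]

theorem card_nthRootsFinset_one_of_dvd {m : ℕ} (hm : m ∣ Fintype.card F - 1) :
    (nthRootsFinset m (1 : F)).card = m := by
  obtain ⟨g, hg⟩ := IsCyclic.exists_ofOrder_eq_natCard (α := Fˣ)
  rw [Nat.card_units, Nat.card_eq_fintype_card] at hg
  have hprim : IsPrimitiveRoot (g : F) (Fintype.card F - 1) :=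
    IsPrimitiveRoot.coe_units_iff.2 (hg ▸ IsPrimitiveRoot.orderOf g)
  obtain ⟨a, ha⟩ := hm
  exact (hprim.pow (by have := Fintype.one_lt_card (α := F); omega)
    (ha.trans (mul_comm _ _))).card_nthRootsFinset

variable {p k m : ℕ} [Fact p.Prime] [CharP F p]

theorem isSquare_one_add_of_pow_eq_one (hF2 : ringChar F ≠ 2)
    (hF : Fintype.card F = (p ^ k) ^ 2) (hm : p ^ k + 1 = 2 * m) {x : F} (hx0 : 1 + x ≠ 0)
    (hx : x ^ m = 1) : IsSquare (1 + x) := by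
  have hs1 : 1 ≤ p ^ k := Nat.one_le_pow _ _ (Fact.out : p.Prime).pos
  -- Frobenius: `(1 + x) ^ p ^ k = 1 + x ^ p ^ k = 1 + x⁻¹`
  have hfrob : (1 + x) ^ p ^ k * x = 1 + x := by
    have hxs : x ^ (p ^ k + 1) = 1 := by rw [hm, pow_mul', hx, one_pow]
    rw [add_pow_char_pow, one_pow]
    linear_combination hxs
  have hpow : (1 + x) ^ (p ^ k - 1) * x = 1 := by
    refine mul_right_cancel₀ hx0 ?_
    calc (1 + x) ^ (p ^ k - 1) * x * (1 + x) = (1 + x) ^ (p ^ k - 1 + 1) * x := by ring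
      _ = 1 * (1 + x) := by rw [Nat.sub_add_cancel hs1, hfrob, one_mul]
  rw [FiniteField.isSquare_iff hF2 hx0, hF, Nat.sq_eq_two_mul_add_one hm,
    Nat.mul_add_div two_pos, Nat.div_eq_of_lt one_lt_two, add_zero, pow_mul]
  calc ((1 + x) ^ (p ^ k - 1)) ^ m = ((1 + x) ^ (p ^ k - 1)) ^ m * x ^ m := by rw [hx, mul_one]
    _ = 1 := by rw [← mul_pow, hpow, one_pow]

theorem isSquare_neg_add_of_pow_eq_one (hF2 : ringChar F ≠ 2) (hneg : IsSquare (-1 : F))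
    (hF : Fintype.card F = (p ^ k) ^ 2) (hm : p ^ k + 1 = 2 * m) (hm_odd : Odd m) {x y : F}
    (hx : x ^ m = 1) (hy : y ^ m = 1) : IsSquare (-(x + y)) ∧ x + y ≠ 0 := by
  have hx0 : x ≠ 0 := ne_zero_pow (n := m) (by omega) (by rw [hx]; exact one_ne_zero)
  have hyx : (y / x) ^ m = 1 := by rw [div_pow, hx, hy, div_one]
  have h1 : 1 + y / x ≠ 0 := one_add_ne_zero_of_pow_eq_one hF2 hm_odd hyx
  have hxy : x + y = x * (1 + y / x) := by field_simp
  refine ⟨?_, hxy ▸ mul_ne_zero hx0 h1⟩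
  rw [hxy, neg_eq_neg_one_mul, ← mul_assoc]
  exact (hneg.mul (isSquare_of_pow_eq_one_of_odd hm_odd hx)).mul
    (isSquare_one_add_of_pow_eq_one hF2 hF hm h1 hyx)

theorem isSquare_neg_add_of_mem_insert_zero [DecidableEq F] (hF2 : ringChar F ≠ 2)
    (hneg : IsSquare (-1 : F))
    (hF : Fintype.card F = (p ^ k) ^ 2) (hm : p ^ k + 1 = 2 * m) (hm_odd : Odd m) {x y : F}
    (hx : x ∈ insert 0 (nthRootsFinset m (1 : F))) (hy : y ∈ insert 0 (nthRootsFinset m (1 : F)))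
    (hxy : ¬(x = 0 ∧ y = 0)) : IsSquare (-(x + y)) ∧ x + y ≠ 0 := by
  have hsingle {z : F} (hz : z ^ m = 1) : IsSquare (-z) ∧ z ≠ 0 :=
    ⟨neg_eq_neg_one_mul z ▸ hneg.mul (isSquare_of_pow_eq_one_of_odd hm_odd hz),
      ne_zero_pow (n := m) (by omega) (by rw [hz]; exact one_ne_zero)⟩
  rw [Finset.mem_insert, mem_nthRootsFinset (by omega)] at hx hy
  rcases hx with rfl | hx <;> rcases hy with rfl | hy
  · exact absurd ⟨rfl, rfl⟩ hxy
  · simpa using hsingle hy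
  · simpa using hsingle hx
  · exact isSquare_neg_add_of_pow_eq_one hF2 hneg hF hm hm_odd hx hy

theorem exists_finset_card_eq_forall_isSquare_neg_add (hF : Fintype.card F = (p ^ k) ^ 2)
    (hm : p ^ k + 1 = 2 * m) (hm_odd : Odd m) :
    ∃ W : Finset F, W.card = m + 1 ∧
      ∀ w ∈ W, ∀ w' ∈ W, IsSquare (-(w + w')) → w = 0 ∧ w' = 0 := by
  classical
  have hq := Nat.sq_eq_two_mul_add_one hm
  have hF2 : ringChar F ≠ 2 := by
    rw [Ne, FiniteField.even_card_iff_char_two, hF, hq]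
    omega
  have hneg : IsSquare (-1 : F) := by
    have hs : p ^ k % 4 = 1 := by obtain ⟨j, rfl⟩ := hm_odd; omega
    rw [FiniteField.isSquare_neg_one_iff, hF, Nat.pow_mod, hs]
    decide
  obtain ⟨g, hg⟩ := FiniteField.exists_nonsquare hF2
  have hg0 : g ≠ 0 := by rintro rfl; exact hg IsSquare.zero
  refine ⟨(insert 0 (nthRootsFinset m (1 : F))).image (g * ·), ?_, ?_⟩
  · have hdvd : m ∣ Fintype.card F - 1 := ⟨2 * (p ^ k - 1), by rw [hF, hq]; ring_nf; omega⟩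
    have h0 : (0 : F) ∉ nthRootsFinset m (1 : F) := by
      simp [mem_nthRootsFinset (show 0 < m by omega), zero_pow (show m ≠ 0 by omega)]
    rw [Finset.card_image_of_injective _ (mul_right_injective₀ hg0),
      Finset.card_insert_of_notMem h0, card_nthRootsFinset_one_of_dvd hdvd]
  · simp only [Finset.mem_image]
    rintro _ ⟨x, hx, rfl⟩ _ ⟨y, hy, rfl⟩ hsq
    by_cases hxy : x = 0 ∧ y = 0
    · simp [hxy]
    obtain ⟨hsq', hne⟩ := isSquare_neg_add_of_mem_insert_zero hF2 hneg hF hm hm_odd hx hy hxy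
    refine absurd ?_ hg
    rw [show -(g * x + g * y) = g * -(x + y) by ring] at hsq
    simpa only [mul_div_cancel_right₀ g (neg_ne_zero.2 hne)] using hsq.div hsq'

end FiniteField

theorem alpha_ER_ge_of_sqrt_one_mod_four_general
    (p k s : ℕ) (hp : p.Prime) (hs : s = p ^ k)
    (hmod : s % 4 = 1)
    (F : Type) [Field F] [Fintype F] (hF : Fintype.card F = s ^ 2) :
    ∃ S : Set (Projectivization F (Fin 3 → F)),
      (∀ P ∈ S, ∀ Q ∈ S, ¬ (ER F).Adj P Q) ∧
      (s ^ 3 + 3 * s ^ 2) / 2 + 1 ≤ S.ncard := by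
  have := Fact.mk hp
  have hFp : Fintype.card F = (p ^ k) ^ 2 := hs ▸ hF
  have : CharP F p := charP_of_card_eq_prime_pow (hFp.trans (pow_mul p k 2).symm)
  set m := (s + 1) / 2
  have hm : s + 1 = 2 * m := by omega
  obtain ⟨W, hWcard, hW⟩ :=
    exists_finset_card_eq_forall_isSquare_neg_add hFp (hs ▸ hm) ⟨s / 4, by omega⟩
  refine ⟨conicUnion W, fun P hP Q hQ hPQ => isIndepSet_conicUnion hW hP hQ hPQ.ne hPQ, ?_⟩
  rw [ncard_conicUnion, hF, hWcard]
  have hcube : s ^ 3 + 3 * s ^ 2 = 2 * (s ^ 2 * (m + 1)) := by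
    rw [mul_left_comm, mul_add, ← hm]
    ring
  omega

/-- If `q = s²` is an even power of an odd prime with `s = √q ≡ 1 (mod 4)`, then
`α(ER_q) ≥ (q^{3/2} + q)/2 + q + 1 = (s³ + 3s²)/2 + 1`. -/
theorem alpha_ER_ge_of_sqrt_one_mod_four
    (p k s : ℕ) (hp : p.Prime) (hpodd : Odd p) (hk : 0 < k) (hs : s = p ^ k)
    (hmod : s % 4 = 1)
    (F : Type) [Field F] [Fintype F] (hF : Fintype.card F = s ^ 2) :
    ∃ S : Set (Projectivization F (Fin 3 → F)),
      (∀ P ∈ S, ∀ Q ∈ S, ¬ (ER F).Adj P Q) ∧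
      (s ^ 3 + 3 * s ^ 2) / 2 + 1 ≤ S.ncard :=
  alpha_ER_ge_of_sqrt_one_mod_four_general p k s hp hs hmod F hF
end

section
/- Let q be an even power of an odd prime with √q ≡ 3 (mod 4), and let w ∈ F_q be a nonsquare. Then there do not exist a, b, c, d in the subfield F_{√q} of F_q with ad − bc ≠ 0 satisfying c²w² + (a² + d²)w + b² = 0. -/
/-!
Let `σ x = x ^ s`, a ring endomorphism of `F` fixing the subfield `F_s`. Applying `σ` to the
equation shows that `σ w` is a root of the same quadratic, and `σ w ≠ w` since every element of
`F_s` is a square in `F`. If `c ≠ 0`, Vieta gives `w ^ (s + 1) = w * σ w = (b / c) ^ 2`, and by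
Euler's criterion an element whose norm to `F_s` is a square of `F_s` is itself a square. If
`c = 0`, Vieta gives `a ^ 2 + d ^ 2 = 0` with `d ≠ 0`, so `a / d ∈ F_s` is a square root of `-1`,
which `s ≡ 3 (mod 4)` rules out.
-/

theorem vieta_of_two_roots {R : Type*} [CommRing R] [IsDomain R] {A B C x y : R} (hxy : x ≠ y)
    (hx : A * x ^ 2 + B * x + C = 0) (hy : A * y ^ 2 + B * y + C = 0) :
    A * (x + y) = -B ∧ A * (x * y) = C := by
  have hsum : A * (x + y) = -B := by
    have : (x - y) * (A * (x + y) + B) = 0 := by linear_combination hx - hy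
    linear_combination (mul_eq_zero.1 this).resolve_left (sub_ne_zero.2 hxy)
  exact ⟨hsum, by linear_combination x * hsum - hx⟩

theorem sq_ne_neg_one_of_pow_eq_self {R : Type*} [CommRing R] [IsDomain R]
    (hR : ringChar R ≠ 2) {s : ℕ} (hs : s % 4 = 3) {x : R} (hx : x ^ s = x) : x ^ 2 ≠ -1 := by
  intro hx2
  obtain ⟨m, rfl⟩ : ∃ m, s = 4 * m + 3 := ⟨s / 4, by omega⟩
  have hneg : -x = x :=
    calc -x = (x ^ 2) ^ (2 * m + 1) * x := by
          rw [hx2, (odd_two_mul_add_one m).neg_one_pow, neg_one_mul]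
      _ = x ^ (4 * m + 3) := by ring
      _ = x := hx
  rw [(Ring.eq_self_iff_eq_zero_of_char_ne_two hR).1 hneg] at hx2
  simp at hx2

namespace FiniteField

variable {F : Type*} [Field F] [Fintype F]

theorem exists_ringHom_eq_pow_of_dvd_card {s : ℕ} (hs : s ∣ Fintype.card F) :
    ∃ φ : F →+* F, ∀ x, φ x = x ^ s := by
  obtain ⟨n, hr, hcard⟩ := card F (ringChar F)
  obtain ⟨m, -, rfl⟩ := (Nat.dvd_prime_pow hr).1 (hcard ▸ hs)
  have : Fact (ringChar F).Prime := ⟨hr⟩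
  exact ⟨iterateFrobenius F (ringChar F) m, fun x => iterateFrobenius_def ..⟩

theorem ringChar_ne_two_of_card_eq_sq {s : ℕ} (hF : Fintype.card F = s ^ 2) (hs : Odd s) :
    ringChar F ≠ 2 := by
  rw [Ne, even_card_iff_char_two, hF, ← Nat.even_iff, Nat.not_even_iff_odd]
  exact hs.pow

theorem isSquare_of_pow_succ_eq_sq {s : ℕ} (hF : Fintype.card F = s ^ 2) (hs : Odd s) {w e : F}
    (he : e ^ s = e) (hw : w ^ (s + 1) = e ^ 2) : IsSquare w := by
  rcases eq_or_ne w 0 with rfl | hw0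
  · exact .zero
  have he0 : e ≠ 0 := by rintro rfl; simp_all
  obtain ⟨m, rfl⟩ := hs
  have hcard : Fintype.card F / 2 = (2 * m + 1 + 1) * m := by
    rw [hF]
    have : (2 * m + 1) ^ 2 = 2 * ((2 * m + 1 + 1) * m) + 1 := by ring
    omega
  have he1 : e ^ (2 * m) = 1 := by
    rw [pow_succ] at he
    exact (mul_eq_right₀ he0).1 he
  rw [isSquare_iff (ringChar_ne_two_of_card_eq_sq hF ⟨m, rfl⟩) hw0, hcard, pow_mul, hw,
    ← pow_mul, he1]

end FiniteField

theorem no_subfield_solution_general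
    (s : ℕ)
    (hmod : s % 4 = 3)
    (F : Type) [Field F] [Fintype F] (hF : Fintype.card F = s ^ 2)
    (w : F) (hw : ¬ IsSquare w) :
    ¬ ∃ a b c d : F, a ^ s = a ∧ b ^ s = b ∧ c ^ s = c ∧ d ^ s = d ∧
      a * d - b * c ≠ 0 ∧ c ^ 2 * w ^ 2 + (a ^ 2 + d ^ 2) * w + b ^ 2 = 0 := by
  rintro ⟨a, b, c, d, ha, hb, hc, hd, hdet, hroot⟩
  have hs : Odd s := Nat.odd_iff.2 (by omega)
  obtain ⟨σ, hσ⟩ :=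
    FiniteField.exists_ringHom_eq_pow_of_dvd_card (hF ▸ dvd_pow_self s two_ne_zero)
  have hσroot : c ^ 2 * (w ^ s) ^ 2 + (a ^ 2 + d ^ 2) * w ^ s + b ^ 2 = 0 := by
    have h := congrArg σ hroot
    simp only [map_add, map_mul, map_pow, map_zero] at h
    simpa only [hσ, ha, hb, hc, hd] using h
  have hσw : w ≠ w ^ s := fun h =>
    hw (FiniteField.isSquare_of_pow_succ_eq_sq hF hs h.symm (by rw [pow_succ, ← h, sq]))
  obtain ⟨hsum, hprod⟩ := vieta_of_two_roots hσw hroot hσroot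
  rcases eq_or_ne c 0 with rfl | hc0
  · have hd0 : d ≠ 0 := by rintro rfl; simp at hdet
    refine sq_ne_neg_one_of_pow_eq_self (FiniteField.ringChar_ne_two_of_card_eq_sq hF hs) hmod
      (x := a / d) (by rw [div_pow, ha, hd]) ?_
    field_simp
    linear_combination hsum
  · refine hw (FiniteField.isSquare_of_pow_succ_eq_sq hF hs (e := b / c)
      (by rw [div_pow, hb, hc]) ?_)
    field_simp
    linear_combination hprod

/-- Let `q = s²` be an even power of an odd prime with `s = √q ≡ 3 (mod 4)` and let
`w ∈ F_q` be a nonsquare. Then there are no `a, b, c, d` in the subfield `F_{√q}`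
(characterized by `x^s = x`) with `ad - bc ≠ 0` and `c²w² + (a² + d²)w + b² = 0`. -/
theorem no_subfield_solution
    (p k s : ℕ) (hp : p.Prime) (hpodd : Odd p) (hk : 0 < k) (hs : s = p ^ k)
    (hmod : s % 4 = 3)
    (F : Type) [Field F] [Fintype F] (hF : Fintype.card F = s ^ 2)
    (w : F) (hw : ¬ IsSquare w) :
    ¬ ∃ a b c d : F, a ^ s = a ∧ b ^ s = b ∧ c ^ s = c ∧ d ^ s = d ∧
      a * d - b * c ≠ 0 ∧ c ^ 2 * w ^ 2 + (a ^ 2 + d ^ 2) * w + b ^ 2 = 0 :=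
  no_subfield_solution_general s hmod F hF w hw
end

section
/- Let q be an even power of an odd prime with √q ≡ 1 (mod 4). If a ∈ F_q satisfies a^{√q+1} = 1, then a² + 1 is a square in F_q. -/
/-- Let `q = s²` be an even power of an odd prime with `s = √q ≡ 1 (mod 4)`. If
`a ∈ F_q` satisfies `a^{s+1} = 1`, then `a² + 1` is a square in `F_q`. -/
theorem sq_add_one_is_square
    (p k s : ℕ) (hp : p.Prime) (hpodd : Odd p) (hk : 0 < k) (hs : s = p ^ k)
    (hmod : s % 4 = 1)
    (F : Type) [Field F] [Fintype F] (hF : Fintype.card F = s ^ 2)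
    (a : F) (ha : a ^ (s + 1) = 1) :
    IsSquare (a ^ 2 + 1) := by
  -- characteristic of F is p
  obtain ⟨q, hq⟩ := CharP.exists F
  haveI := hq
  have hqprime : q.Prime := CharP.char_is_prime F q
  obtain ⟨n, -, hcard⟩ := FiniteField.card F q
  have hqp : q = p := by
    have h1 : q ∣ s ^ 2 := by
      rw [← hF, hcard]
      exact dvd_pow_self q n.pos.ne'
    rw [hs, ← pow_mul] at h1
    exact (Nat.prime_dvd_prime_iff_eq hqprime hp).mp (hqprime.dvd_of_dvd_pow h1)
  subst hqp
  haveI : Fact q.Prime := ⟨hqprime⟩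
  have hchar2 : ringChar F ≠ 2 := by
    have hrc : ringChar F = q := ringChar.eq F q
    rw [hrc]
    intro h2
    rw [h2] at hpodd
    exact (by norm_num : ¬ Odd 2) hpodd
  have ha0 : a ≠ 0 := by
    intro h
    rw [h, zero_pow (by omega)] at ha
    exact one_ne_zero ha.symm
  obtain ⟨m, hm⟩ : ∃ m, s = 4 * m + 1 := ⟨s / 4, by omega⟩
  have hs1 : 1 ≤ s := by omega
  have haq : a ^ s ^ 2 = a := by
    have he : s ^ 2 = (s + 1) * (s - 1) + 1 := by
      have h1 : s - 1 = 4 * m := by omega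
      rw [h1, hm]; ring
    rw [he, pow_add, pow_mul, ha, one_pow, pow_one, one_mul]
  by_cases hz : a ^ 2 + 1 = 0
  · rw [hz]; exact ⟨0, (zero_mul 0).symm⟩
  set c : F := a + a ^ s with hc
  have hcs : c ^ s = c := by
    rw [hc, hs, add_pow_char_pow, ← hs, ← pow_mul, ← pow_two, haq]; exact add_comm _ _
  have hac : a * c = a ^ 2 + 1 := by
    have h1 : a * a ^ s = 1 := (pow_succ' a s).symm.trans ha
    rw [hc, mul_add, h1, ← pow_two]
  have hc0 : c ≠ 0 := fun h => hz (by rw [← hac, h, mul_zero])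
  have hcpow : c ^ (s - 1) = 1 := by
    rw [pow_sub₀ c hc0 hs1, hcs, pow_one, mul_inv_cancel₀ hc0]
  have key1 : s ^ 2 = 2 * ((s + 1) * (2 * m)) + 1 := by rw [hm]; ring
  have key2 : s ^ 2 = 2 * ((s - 1) * (2 * m + 1)) + 1 := by
    have h1 : s - 1 = 4 * m := by omega
    rw [h1, hm]; ring
  have hNa : s ^ 2 / 2 = (s + 1) * (2 * m) := by omega
  have hNc : s ^ 2 / 2 = (s - 1) * (2 * m + 1) := by omega
  have h1 : a ^ (s ^ 2 / 2) = 1 := by rw [hNa, pow_mul, ha, one_pow]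
  have h2 : c ^ (s ^ 2 / 2) = 1 := by rw [hNc, pow_mul, hcpow, one_pow]
  rw [FiniteField.isSquare_iff hchar2 hz, hF, ← hac, mul_pow, h1, h2, one_mul]
end

section
/- Let q be a power of 2, let α ∈ F_q have absolute trace Tr(α) = 1, and let λ ∈ F_q have Tr(λ) = 0. Then no two points (equal or distinct) of the conic C_{λ²} : X₂² + X₂X₃ + αX₃² + λ²X₁² = 0 in PG(2,q) are conjugate with respect to the pseudo polarity; that is, for all points R = (r₁,r₂,r₃) and S = (s₁,s₂,s₃) on C_{λ²}, one has r₁s₁ + r₃s₂ + r₂s₃ ≠ 0. -/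
/-!
Write `N(x, y) = x² + xy + βy²`. Over `F_q`, `q` even, the equation `t² + t + β = 0` has no root
when `Tr β = 1`, since `Tr (t² + t) = 2 Tr t = 0`; hence `N` is then anisotropic. With `β = α`
this forces `r₁ ≠ 0` for a point `r` of the conic, and with `β = α + c²` for `c = λ r₁ / r₃` it
forces `Tr c = 1` whenever `r₃ ≠ 0`. If `r` and `s` are conjugate points of the conic, squaring
the conjugacy relation and eliminating `r₂²`, `s₂²` gives
`λ²(r₁s₃)² + (r₁s₃)(r₃s₁) + λ²(r₃s₁)² + (r₁s₁)² = 0`, which says that `λ² r₁s₃ / (r₃s₁)` is a root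
of `t² + t + (c² + λ⁴)`; but `Tr (c² + λ⁴) = Tr c + Tr λ = 1`. By symmetry this leaves only
`r₃ = s₃ = 0`, where conjugacy reads `r₁s₁ = 0`.
-/

open Algebra

theorem Algebra.trace_pow_card {K L : Type*} [Field K] [Fintype K] [Field L] [Algebra K L]
    [Algebra.IsAlgebraic K L] (x : L) : trace K L (x ^ Fintype.card K) = trace K L x :=
  trace_eq_of_algEquiv (FiniteField.frobeniusAlgEquivOfAlgebraic K L) x

section TraceTwo

variable {F : Type*} [Field F] [Finite F] [Algebra (ZMod 2) F]

theorem trace_sq (x : F) : trace (ZMod 2) F (x ^ 2) = trace (ZMod 2) F x := by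
  simpa using trace_pow_card (K := ZMod 2) x

theorem trace_sq_add_self (t : F) : trace (ZMod 2) F (t ^ 2 + t) = 0 := by
  rw [map_add, trace_sq, CharTwo.add_self_eq_zero]

theorem sq_add_self_add_ne_zero {β : F} (hβ : trace (ZMod 2) F β = 1) (t : F) :
    t ^ 2 + t + β ≠ 0 := by
  intro h
  have : β = -(t ^ 2 + t) := by linear_combination h
  rw [this, map_neg, trace_sq_add_self, neg_zero] at hβ
  exact zero_ne_one hβ

theorem eq_zero_of_sq_add_mul_add_mul_sq_eq_zero {β x y : F} (hβ : trace (ZMod 2) F β = 1)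
    (h : x ^ 2 + x * y + β * y ^ 2 = 0) : x = 0 ∧ y = 0 := by
  have hy : y = 0 := by
    by_contra hy
    exact sq_add_self_add_ne_zero hβ (x / y) (by field_simp; linear_combination h)
  subst hy
  exact ⟨pow_eq_zero_iff two_ne_zero |>.mp (by simpa using h), rfl⟩

end TraceTwo

def OnConic {R : Type*} [CommRing R] (α l : R) (t : Fin 3 → R) : Prop :=
  t 1 ^ 2 + t 1 * t 2 + α * t 2 ^ 2 + l ^ 2 * t 0 ^ 2 = 0

def IsConjugate {R : Type*} [CommRing R] (r s : Fin 3 → R) : Prop :=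
  r 0 * s 0 + r 2 * s 1 + r 1 * s 2 = 0

theorem IsConjugate.symm {R : Type*} [CommRing R] {r s : Fin 3 → R} (h : IsConjugate r s) :
    IsConjugate s r := by
  unfold IsConjugate at *
  linear_combination h

-- Square the conjugacy relation and eliminate `r 1 ^ 2`, `s 1 ^ 2`; the `α`-terms cancel.
theorem IsConjugate.quadratic_relation {R : Type*} [CommRing R] [CharP R 2] {α l : R}
    {r s : Fin 3 → R} (h : IsConjugate r s) (hr : OnConic α l r) (hs : OnConic α l s) :
    l ^ 2 * (r 0 * s 2) ^ 2 + r 0 * s 2 * (r 2 * s 0) + l ^ 2 * (r 2 * s 0) ^ 2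
      + (r 0 * s 0) ^ 2 = 0 := by
  unfold OnConic at hr hs
  unfold IsConjugate at h
  linear_combination s 2 ^ 2 * hr - r 2 ^ 2 * hs
    - (r 1 * s 2 - r 2 * s 1 + r 2 * s 2 - r 0 * s 0) * h
    + (r 0 * r 2 * s 0 * s 2 + l ^ 2 * (r 2 * s 0) ^ 2 + r 2 * s 1 * (r 2 * s 2 - r 0 * s 0))
      * CharTwo.two_eq_zero (R := R)

section Conic

variable {F : Type*} [Field F] [Finite F] [Algebra (ZMod 2) F] {α l : F}

theorem OnConic.apply_zero_ne_zero (hα : trace (ZMod 2) F α = 1) {t : Fin 3 → F}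
    (ht : OnConic α l t) (ht0 : t ≠ 0) : t 0 ≠ 0 := by
  intro h0
  obtain ⟨h1, h2⟩ := eq_zero_of_sq_add_mul_add_mul_sq_eq_zero hα
    (by simpa [OnConic, h0] using ht)
  exact ht0 (funext fun i => by fin_cases i <;> assumption)

theorem OnConic.trace_div_apply_two_eq_one (hα : trace (ZMod 2) F α = 1) {t : Fin 3 → F}
    (ht : OnConic α l t) (ht2 : t 2 ≠ 0) : trace (ZMod 2) F (l * t 0 / t 2) = 1 := by
  by_contra hc
  replace hc : trace (ZMod 2) F (l * t 0 / t 2) = 0 := by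
    contrapose! hc
    exact Fin.eq_one_of_ne_zero _ hc
  have hβ : trace (ZMod 2) F (α + (l * t 0 / t 2) ^ 2) = 1 := by
    rw [map_add, hα, trace_sq, hc, add_zero]
  refine ht2 (eq_zero_of_sq_add_mul_add_mul_sq_eq_zero (x := t 1) hβ ?_).2
  unfold OnConic at ht
  field_simp
  linear_combination ht

theorem OnConic.not_isConjugate (hα : trace (ZMod 2) F α = 1) (hl : trace (ZMod 2) F l = 0)
    {r s : Fin 3 → F} (hr : OnConic α l r) (hs : OnConic α l s) (hr2 : r 2 ≠ 0) (hs0 : s 0 ≠ 0) :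
    ¬ IsConjugate r s := by
  intro hconj
  have : CharP F 2 := charP_of_injective_algebraMap' (ZMod 2) 2
  have hrel := hconj.quadratic_relation hr hs
  have hβ : trace (ZMod 2) F ((l * r 0 / r 2) ^ 2 + (l ^ 2) ^ 2) = 1 := by
    rw [map_add, trace_sq, hr.trace_div_apply_two_eq_one hα hr2, trace_sq, trace_sq, hl,
      add_zero]
  apply sq_add_self_add_ne_zero hβ (l ^ 2 * r 0 * s 2 / (r 2 * s 0))
  field_simp
  linear_combination l ^ 2 * hrel

end Conic

theorem conic_self_non_conjugate_general
    (F : Type) [Field F] [Fintype F] [Algebra (ZMod 2) F]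
    (α l : F) (hα : Algebra.trace (ZMod 2) F α = 1)
    (hl : Algebra.trace (ZMod 2) F l = 0)
    (r s : Fin 3 → F) (hr : r ≠ 0) (hs : s ≠ 0)
    (hrC : r 1 ^ 2 + r 1 * r 2 + α * r 2 ^ 2 + l ^ 2 * r 0 ^ 2 = 0)
    (hsC : s 1 ^ 2 + s 1 * s 2 + α * s 2 ^ 2 + l ^ 2 * s 0 ^ 2 = 0) :
    r 0 * s 0 + r 2 * s 1 + r 1 * s 2 ≠ 0 := by
  have hrC : OnConic α l r := hrC
  have hsC : OnConic α l s := hsC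
  have hr0 := hrC.apply_zero_ne_zero hα hr
  have hs0 := hsC.apply_zero_ne_zero hα hs
  intro hconj
  by_cases hr2 : r 2 = 0
  · by_cases hs2 : s 2 = 0
    · simp only [hr2, hs2, zero_mul, mul_zero, add_zero] at hconj
      exact mul_ne_zero hr0 hs0 hconj
    · exact hsC.not_isConjugate hα hl hrC hs2 hr0 (IsConjugate.symm hconj)
  · exact hrC.not_isConjugate hα hl hsC hr2 hs0 hconj

/-- Let `q = 2ⁿ`, let `α ∈ F_q` have absolute trace `1` and `l ∈ F_q` have absolute
trace `0`. Then no two points (equal or distinct) of the conic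
`C_{l²} : X₂² + X₂X₃ + αX₃² + l²X₁² = 0` of `PG(2,q)` are conjugate with respect to the
pseudo polarity: for any representatives `r`, `s` of points of `C_{l²}` one has
`r₁s₁ + r₃s₂ + r₂s₃ ≠ 0`. -/
theorem conic_self_non_conjugate
    (n : ℕ) (hn : 0 < n)
    (F : Type) [Field F] [Fintype F] [Algebra (ZMod 2) F]
    (hF : Fintype.card F = 2 ^ n)
    (α l : F) (hα : Algebra.trace (ZMod 2) F α = 1)
    (hl : Algebra.trace (ZMod 2) F l = 0)
    (r s : Fin 3 → F) (hr : r ≠ 0) (hs : s ≠ 0)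
    (hrC : r 1 ^ 2 + r 1 * r 2 + α * r 2 ^ 2 + l ^ 2 * r 0 ^ 2 = 0)
    (hsC : s 1 ^ 2 + s 1 * s 2 + α * s 2 ^ 2 + l ^ 2 * s 0 ^ 2 = 0) :
    r 0 * s 0 + r 2 * s 1 + r 1 * s 2 ≠ 0 :=
  conic_self_non_conjugate_general F α l hα hl r s hr hs hrC hsC
end
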